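/- arXiv:2203.07279 — 6 statements merged into one kernel-verified Lean document; each statement's English description precedes it below -/
import Mathlib

section
/- In a chores-only lexicographic instance, a complete allocation is Pareto optimal if and only if it is sequencible. -/
attribute [local instance 10] Classical.propDecidable

/-- A lexicographic mixed instance: each agent `i` has a set `G i` of goods
(its complement being the chores `C i`) and a strict linear importance order
`⊳_i` on the items, encoded as a linear order where larger means more important. -/
structure LexInstance (N M : Type) [Fintype N] [Fintype M] [DecidableEq M] where
  G : N → Finset M
  ord : N → LinearOrder M

namespace LexInstance

variable {N M : Type} [Fintype N] [Fintype M] [DecidableEq M]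

/-- `inst.imp i a b` means `a ⊳_i b` : `a` is more important than `b` for agent `i`. -/
def imp (inst : LexInstance N M) (i : N) (a b : M) : Prop := (inst.ord i).lt b a

/-- The chores of agent `i`. -/
def C (inst : LexInstance N M) (i : N) : Finset M := (inst.G i)ᶜ

/-- Strict lexicographic preference `X ≻_i Y`. -/
def SPref (inst : LexInstance N M) (i : N) (X Y : Finset M) : Prop :=
  (∃ g ∈ inst.G i ∩ (X \ Y), ∀ o ∈ Y ∩ inst.G i, inst.imp i o g → o ∈ X) ∨
  (∃ c ∈ inst.C i ∩ (Y \ X), ∀ o ∈ X ∩ inst.C i, inst.imp i o c → o ∈ Y)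

/-- Weak lexicographic preference `X ⪰_i Y`. -/
def WPref (inst : LexInstance N M) (i : N) (X Y : Finset M) : Prop :=
  inst.SPref i X Y ∨ X = Y

/-- A (complete) allocation: pairwise disjoint bundles whose union is all of `M`. -/
def IsAllocation (_inst : LexInstance N M) (A : N → Finset M) : Prop :=
  (∀ i j, i ≠ j → Disjoint (A i) (A j)) ∧ ∀ o : M, ∃ i, o ∈ A i

/-- Pareto optimality of a (complete) allocation. -/
def ParetoOptimal (inst : LexInstance N M) (A : N → Finset M) : Prop :=
  ¬ ∃ B : N → Finset M, inst.IsAllocation B ∧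
      (∀ i, inst.WPref i (B i) (A i)) ∧ ∃ h, inst.SPref h (B h) (A h)

/-- The item agent `i` picks from the remaining set `R`: its `⊳_i`-greatest
remaining good if there is one, and otherwise the `⊳_i`-least remaining item. -/
noncomputable def pickOne (inst : LexInstance N M) (i : N) (R : Finset M)
    (h : R.Nonempty) : M :=
  if hg : (R ∩ inst.G i).Nonempty then @Finset.max' M (inst.ord i) (R ∩ inst.G i) hg
  else @Finset.min' M (inst.ord i) R h

/-- Run the picking procedure along a sequence of agents, starting from the
remaining items `R`; returns the resulting bundles. -/
noncomputable def runPick (inst : LexInstance N M) : List N → Finset M → N → Finset M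
  | [], _ => fun _ => ∅
  | i :: rest, R =>
    if h : R.Nonempty then
      fun j =>
        runPick inst rest (R.erase (inst.pickOne i R h)) j ∪
          (if j = i then {inst.pickOne i R h} else ∅)
    else fun _ => ∅

/-- An allocation is sequencible if it is produced by some picking sequence of
length `|M|` starting from all items. -/
def Sequencible (inst : LexInstance N M) (A : N → Finset M) : Prop :=
  ∃ s : List N, s.length = Fintype.card M ∧ inst.runPick s Finset.univ = A

/-- A chores-only instance: every item is a chore for every agent. -/
def ChoresOnly (inst : LexInstance N M) : Prop := ∀ i, inst.G i = ∅

/-- Envy-freeness up to any item. -/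
def EFX (inst : LexInstance N M) (A : N → Finset M) : Prop :=
  ∀ i h : N,
    (∀ o ∈ A h ∩ inst.G i, inst.WPref i (A i) ((A h).erase o)) ∧
    (∀ o ∈ A i ∩ inst.C i, inst.WPref i ((A i).erase o) (A h))

/-- Envy-freeness up to any chore. -/
def EFXc (inst : LexInstance N M) (A : N → Finset M) : Prop :=
  ∀ i h : N, ∀ o ∈ A i ∩ inst.C i, inst.WPref i ((A i).erase o) (A h)

/-- Envy-freeness up to one item. -/
def EF1 (inst : LexInstance N M) (A : N → Finset M) : Prop :=
  ∀ i h : N, ((A i ∩ inst.C i) ∪ (A h ∩ inst.G i)).Nonempty →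
    ∃ o ∈ (A i ∩ inst.C i) ∪ (A h ∩ inst.G i),
      inst.WPref i (A i) ((A h).erase o) ∨ inst.WPref i ((A i).erase o) (A h)

/-- `A` gives every agent at least its maximin share: for every partition `P`
of the items into `n` bundles, agent `i` weakly prefers `A i` to some bundle of
`P` (hence to the `⪰_i`-least bundle of `P`). -/
def MMSfair (inst : LexInstance N M) (A : N → Finset M) : Prop :=
  ∀ i, ∀ P : N → Finset M, inst.IsAllocation P → ∃ j, inst.WPref i (A i) (P j)

/-- `B` is the maximin share `MMS_i` of agent `i`: `B` is the `⪰_i`-least bundle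
of some partition of `M` into `n` bundles, and every such partition contains a
bundle to which `B` is weakly preferred. -/
def IsMMSBundle (inst : LexInstance N M) (i : N) (B : Finset M) : Prop :=
  (∃ P : N → Finset M, inst.IsAllocation P ∧ (∃ j, P j = B) ∧
      ∀ j, inst.WPref i (P j) B) ∧
  (∀ P : N → Finset M, inst.IsAllocation P → ∃ j, inst.WPref i B (P j))

/-- The `k`-th (0-indexed) `⊳_i`-greatest good of agent `i`, if any. -/
noncomputable def kthGood (inst : LexInstance N M) (i : N) (k : ℕ) : Option M :=
  letI : LinearOrder M := inst.ord i
  (((inst.G i).sort (· ≤ ·)).reverse)[k]?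

/-- The `k`-th (0-indexed) `⊳_i`-least chore of agent `i`, if any. -/
noncomputable def kthChore (inst : LexInstance N M) (i : N) (k : ℕ) : Option M :=
  letI : LinearOrder M := inst.ord i
  ((inst.C i).sort  (· ≤ ·))[k]?

/-- Number of agents receiving their `k`-th (0-indexed) greatest good. -/
noncomputable def nPlus (inst : LexInstance N M) (A : N → Finset M) (k : ℕ) : ℕ :=
  (Finset.univ.filter fun i => (inst.kthGood i k).elim False (· ∈ A i)).card

/-- Number of agents receiving their `k`-th (0-indexed) least chore. -/
noncomputable def nMinus (inst : LexInstance N M) (A : N → Finset M) (k : ℕ) : ℕ :=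
  (Finset.univ.filter fun i => (inst.kthChore i k).elim False (· ∈ A i)).card

/-- The rank signature `(n_1^+, …, n_m^+, n_1^-, …, n_m^-)` of an allocation. -/
noncomputable def signature (inst : LexInstance N M) (A : N → Finset M) : List ℕ :=
  ((List.range (Fintype.card M)).map fun k => inst.nPlus A k) ++
    ((List.range (Fintype.card M)).map fun k => inst.nMinus A k)

/-- Rank-maximality: the signature is lexicographically maximal over allocations. -/
def RankMaximal (inst : LexInstance N M) (A : N → Finset M) : Prop :=
  inst.IsAllocation A ∧ ∀ B : N → Finset M, inst.IsAllocation B →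
    ¬ List.Lex (· < ·) (inst.signature A) (inst.signature B)

end LexInstance

/-- The set of the `k` greatest (most important) elements of `S` under `L`. -/
def topK {M : Type} [DecidableEq M] (L : LinearOrder M) (S : Finset M) (k : ℕ) :
    Finset M :=
  letI := L
  S.filter fun o => (S.filter fun o' => o < o').card < k

/-- Build a linear order on `Fin m` from an injective ranking function
(larger value = more important). -/
def mkOrd {m : ℕ} (f : Fin m → ℕ) (hf : Function.Injective f) : LinearOrder (Fin m) :=
  LinearOrder.lift' f hf

/-! With chores only, `X ≻_i Y` says that `X` lies below `Y` in the colexicographic order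
induced by `⊳_i`: the most important item on which they differ is in `Y`.

A picking sequence yields a Pareto optimal allocation: its first picker takes its least
important item `o`, and deleting `o` from a Pareto improvement of the outcome gives a Pareto
improvement of the outcome of the rest of the sequence on the remaining items.

Conversely, in a Pareto optimal allocation some agent holds its own least important item.
Otherwise let each agent `j` point to the holder `φ j` of its least important item; along a
cycle of `φ` every agent can trade the item it holds for its least important one, and all of
them strictly gain. Letting that agent pick first and inducting on the number of items
yields a picking sequence. -/

open Finset Colex Function

namespace Finset.Colex

variable {α : Type*} [PartialOrder α] [DecidableEq α] {s t : Finset α} {a b : α}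

theorem toColex_insert_le_insert_iff (hs : a ∉ s) (ht : a ∉ t) :
    toColex (insert a s) ≤ toColex (insert a t) ↔ toColex s ≤ toColex t := by
  rw [← toColex_sdiff_le_toColex_sdiff (u := {a}) (by simp) (by simp),
    sdiff_singleton_eq_erase, sdiff_singleton_eq_erase, erase_insert hs, erase_insert ht]

theorem toColex_insert_lt_insert_iff (hs : a ∉ s) (ht : a ∉ t) :
    toColex (insert a s) < toColex (insert a t) ↔ toColex s < toColex t := by
  rw [← toColex_sdiff_lt_toColex_sdiff (u := {a}) (by simp) (by simp),
    sdiff_singleton_eq_erase, sdiff_singleton_eq_erase, erase_insert hs, erase_insert ht]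

theorem toColex_erase_lt (ha : a ∈ s) : toColex (s.erase a) < toColex s :=
  toColex_lt_toColex_of_ssubset (erase_ssubset ha)

theorem toColex_erase_le_of_le_insert (hmin : ∀ b ∈ s, a ≤ b) (ht : a ∉ t)
    (h : toColex s ≤ toColex (insert a t)) : toColex (s.erase a) ≤ toColex t := by
  refine toColex_le_toColex.mpr fun x hx hxt => ?_
  obtain ⟨hxa, hxs⟩ := mem_erase.mp hx
  obtain ⟨y, hy, hys, hxy⟩ := h hxs (by simp [hxa, hxt])
  obtain rfl | hyt := mem_insert.mp hy
  · exact absurd (le_antisymm hxy (hmin x hxs)) hxa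
  · exact ⟨y, hyt, fun hy' => hys (mem_of_mem_erase hy'), hxy⟩

theorem toColex_insert_filter_lt {p : α → Prop} [DecidablePred p] (has : a ∉ s)
    (hmin : ∀ b ∈ s, a ≤ b) (hb : b ∈ s) (hpb : ¬ p b) :
    toColex (insert a (s.filter p)) < toColex s := by
  have hbs : b ∉ insert a (s.filter p) := by
    simp [hpb, ne_of_mem_of_not_mem hb has]
  refine toColex_lt_toColex.mpr ⟨fun h => (h ▸ hbs) hb, fun x hx hxs => ?_⟩
  obtain rfl | hx := mem_insert.mp hx
  · exact ⟨b, hb, hbs, hmin b hb⟩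
  · exact absurd (mem_of_mem_filter x hx) hxs

end Finset.Colex

theorem Function.periodicPts_nonempty {α : Type*} [Finite α] [Nonempty α] (f : α → α) :
    (periodicPts f).Nonempty := by
  obtain ⟨x⟩ := ‹Nonempty α›
  obtain ⟨k, n, hkn, hx⟩ :=
    Set.finite_univ.exists_lt_map_eq_of_forall_mem (f := fun n => f^[n] x) fun _ => Set.mem_univ _
  refine ⟨f^[k] x, mk_mem_periodicPts (Nat.sub_pos_of_lt hkn) ?_⟩
  change f^[n - k] (f^[k] x) = f^[k] x
  rw [← iterate_add_apply, Nat.sub_add_cancel hkn.le]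
  exact hx.symm

section Allocation

variable {N M : Type}

def IsAllocationOn (R : Finset M) (A : N → Finset M) : Prop :=
  (∀ i, A i ⊆ R) ∧ (∀ o ∈ R, ∃ i, o ∈ A i) ∧ ∀ i j, i ≠ j → Disjoint (A i) (A j)

theorem IsAllocationOn.eq_of_mem {R : Finset M} {A : N → Finset M} {o : M} {i j : N}
    (hA : IsAllocationOn R A) (hi : o ∈ A i) (hj : o ∈ A j) : i = j := by
  by_contra hij
  exact disjoint_left.mp (hA.2.2 i j hij) hi hj

variable [DecidableEq M]

noncomputable def giveItem (A : N → Finset M) (i : N) (o : M) : N → Finset M :=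
  update A i (insert o (A i))

noncomputable def tradeAlong (A : N → Finset M) (m : N → M) (S : Set N) : N → Finset M :=
  fun j => if j ∈ S then insert (m j) ((A j).filter (· ∉ m '' S)) else A j

variable {R : Finset M} {A : N → Finset M} {o : M} {i j : N}

theorem IsAllocationOn.erase (hA : IsAllocationOn R A) (o : M) :
    IsAllocationOn (R.erase o) fun j => (A j).erase o := by
  refine ⟨fun j => erase_subset_erase o (hA.1 j), fun x hx => ?_, fun j k hjk => ?_⟩
  · obtain ⟨hxo, hxR⟩ := mem_erase.mp hx
    obtain ⟨j, hj⟩ := hA.2.1 x hxR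
    exact ⟨j, mem_erase.mpr ⟨hxo, hj⟩⟩
  · exact (hA.2.2 j k hjk).mono (erase_subset o _) (erase_subset o _)

theorem isAllocationOn_giveItem (hA : IsAllocationOn (R.erase o) A) (ho : o ∈ R) (i : N) :
    IsAllocationOn R (giveItem A i o) := by
  have hoA : ∀ j, o ∉ A j := fun j h => (mem_erase.mp (hA.1 j h)).1 rfl
  refine ⟨fun j => ?_, fun x hx => ?_, fun j k hjk => ?_⟩
  · rcases eq_or_ne j i with rfl | hji
    · simpa [giveItem] using insert_subset ho ((hA.1 j).trans (erase_subset o R))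
    · simpa [giveItem, hji] using (hA.1 j).trans (erase_subset o R)
  · rcases eq_or_ne x o with rfl | hxo
    · exact ⟨i, by simp [giveItem]⟩
    · obtain ⟨j, hj⟩ := hA.2.1 x (mem_erase.mpr ⟨hxo, hx⟩)
      exact ⟨j, by rcases eq_or_ne j i with rfl | hji <;> simp [giveItem, *]⟩
  · have hAjk := hA.2.2 j k hjk
    rcases eq_or_ne j i with rfl | hji
    · simpa [giveItem, hjk.symm, hoA k] using hAjk
    rcases eq_or_ne k i with rfl | hki
    · simpa [giveItem, hjk, hoA j] using hAjk
    · simpa [giveItem, hji, hki] using hAjk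

theorem IsAllocationOn.eq_giveItem_erase (hA : IsAllocationOn R A) (ho : o ∈ A i) :
    A = giveItem (fun j => (A j).erase o) i o := by
  funext j
  rcases eq_or_ne j i with rfl | hji
  · simp [giveItem, insert_erase ho]
  · have hoj : o ∉ A j := fun h => hji (hA.eq_of_mem h ho)
    simp [giveItem, hji, erase_eq_of_notMem hoj]

theorem isAllocationOn_tradeAlong {m : N → M} {φ : N → N} {S : Set N}
    (hA : IsAllocationOn R A) (hφ : ∀ j, m j ∈ A (φ j)) (hmaps : S.MapsTo φ S)
    (hinj : S.InjOn φ) : IsAllocationOn R (tradeAlong A m S) := by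
  have hmR : ∀ j, m j ∈ R := fun j => hA.1 _ (hφ j)
  have mem_iff : ∀ x j, x ∈ tradeAlong A m S j ↔
      (j ∈ S ∧ x = m j) ∨ (x ∈ A j ∧ (j ∈ S → x ∉ m '' S)) := by
    intro x j
    by_cases hj : j ∈ S <;> simp [tradeAlong, hj]
  refine ⟨fun j x hx => ?_, fun x hx => ?_, fun j k hjk => disjoint_left.mpr fun x hxj hxk => ?_⟩
  · rcases (mem_iff x j).mp hx with ⟨-, rfl⟩ | ⟨hx, -⟩
    exacts [hmR j, hA.1 j hx]
  · obtain ⟨k, hk⟩ := hA.2.1 x hx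
    by_cases hxS : x ∈ m '' S
    · obtain ⟨j, hj, rfl⟩ := hxS
      exact ⟨j, (mem_iff _ j).mpr (Or.inl ⟨hj, rfl⟩)⟩
    · exact ⟨k, (mem_iff x k).mpr (Or.inr ⟨hk, fun _ => hxS⟩)⟩
  · rcases (mem_iff x j).mp hxj with ⟨hj, rfl⟩ | ⟨hxj, hj⟩ <;>
      rcases (mem_iff _ k).mp hxk with ⟨hk, hmk⟩ | ⟨hxk, hk⟩
    · exact hjk (hinj hj hk (hA.eq_of_mem (hφ j) (hmk ▸ hφ k)))
    · exact hk (hA.eq_of_mem (hφ j) hxk ▸ hmaps hj) ⟨j, hj, rfl⟩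
    · exact hj (hA.eq_of_mem (hφ k) (hmk ▸ hxj) ▸ hmaps hk) ⟨k, hk, hmk.symm⟩
    · exact hjk (hA.eq_of_mem hxj hxk)

end Allocation

namespace LexInstance

variable {N M : Type} [Fintype N] [Fintype M] [DecidableEq M] {inst : LexInstance N M}
  {i : N} {R X Y : Finset M} {A B : N → Finset M} {o : M}

theorem sPref_iff_toColex_lt (hch : inst.ChoresOnly) :
    inst.SPref i X Y ↔ letI := inst.ord i; toColex X < toColex Y := by
  let := inst.ord i
  rw [toColex_lt_toColex_iff_exists_forall_lt]
  simp only [SPref, C, hch i, compl_empty, empty_inter, univ_inter, inter_univ, mem_sdiff,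
    notMem_empty, false_and, exists_false, false_or, imp, and_assoc]
  refine exists_congr fun c => and_congr_right fun _ => and_congr_right fun hcX =>
    forall₂_congr fun b hb => ?_
  have hbc : b ≠ c := ne_of_mem_of_not_mem hb hcX
  exact ⟨fun h hbY => (not_lt.mp (mt h hbY)).lt_of_ne hbc,
    fun h hcb => by_contra fun hbY => (h hbY).asymm hcb⟩

theorem wPref_iff_toColex_le (hch : inst.ChoresOnly) :
    inst.WPref i X Y ↔ letI := inst.ord i; toColex X ≤ toColex Y := by
  let := inst.ord i
  rw [WPref, sPref_iff_toColex_lt hch, le_iff_lt_or_eq, toColex_inj]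

theorem pickOne_mem (hR : R.Nonempty) : inst.pickOne i R hR ∈ R := by
  let := inst.ord i
  unfold pickOne
  split_ifs with hG
  exacts [mem_of_mem_inter_left (max'_mem _ hG), min'_mem R hR]

theorem pickOne_le (hch : inst.ChoresOnly) (hR : R.Nonempty) {x : M} (hx : x ∈ R) :
    letI := inst.ord i; inst.pickOne i R hR ≤ x := by
  let := inst.ord i
  have hG : ¬ (R ∩ inst.G i).Nonempty := by simp [hch i]
  rw [pickOne, dif_neg hG]
  exact min'_le R x hx

theorem runPick_of_not_nonempty (hR : ¬ R.Nonempty) (s : List N) :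
    inst.runPick s R = fun _ => ∅ := by
  cases s <;> simp [runPick, hR]

theorem runPick_cons (hR : R.Nonempty) (s : List N) :
    inst.runPick (i :: s) R =
      giveItem (inst.runPick s (R.erase (inst.pickOne i R hR))) i (inst.pickOne i R hR) := by
  funext j
  rw [runPick, dif_pos hR]
  rcases eq_or_ne j i with rfl | hji
  · simp [giveItem]
  · simp [giveItem, hji]

theorem runPick_subset (s : List N) (R : Finset M) (j : N) : inst.runPick s R j ⊆ R := by
  induction s generalizing R with
  | nil => simp [runPick]
  | cons i s ih =>
    by_cases hR : R.Nonempty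
    · have hsub := (ih (R.erase (inst.pickOne i R hR))).trans (erase_subset _ R)
      rw [runPick_cons hR]
      rcases eq_or_ne j i with rfl | hji
      · simpa [giveItem] using insert_subset (pickOne_mem hR) hsub
      · simpa [giveItem, hji] using hsub
    · simp [runPick_of_not_nonempty hR]

def ParetoDominates (inst : LexInstance N M) (B A : N → Finset M) : Prop :=
  (∀ i, inst.WPref i (B i) (A i)) ∧ ∃ h, inst.SPref h (B h) (A h)

def ParetoOptimalOn (inst : LexInstance N M) (R : Finset M) (A : N → Finset M) : Prop :=
  ∀ B, IsAllocationOn R B → ¬ inst.ParetoDominates B A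

theorem isAllocationOn_univ_iff : IsAllocationOn univ A ↔ inst.IsAllocation A :=
  ⟨fun h => ⟨h.2.2, fun o => h.2.1 o (mem_univ o)⟩,
    fun h => ⟨fun _ => subset_univ _, fun o _ => h.2 o, h.1⟩⟩

theorem paretoOptimal_iff_paretoOptimalOn_univ :
    inst.ParetoOptimal A ↔ inst.ParetoOptimalOn univ A := by
  simp [ParetoOptimal, ParetoOptimalOn, ParetoDominates, isAllocationOn_univ_iff (inst := inst)]

theorem not_paretoDominates_empty (hch : inst.ChoresOnly) :
    ¬ inst.ParetoDominates B fun _ => ∅ := by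
  rintro ⟨-, h, hlt⟩
  let := inst.ord h
  rw [sPref_iff_toColex_lt hch] at hlt
  exact (toColex_le_toColex_of_subset (empty_subset _)).not_gt hlt

theorem ParetoDominates.giveItem (hch : inst.ChoresOnly) (hB : ∀ j, o ∉ B j)
    (hA : ∀ j, o ∉ A j) (h : inst.ParetoDominates B A) (i : N) :
    inst.ParetoDominates (_root_.giveItem B i o) (_root_.giveItem A i o) := by
  have key : ∀ j, (inst.WPref j (_root_.giveItem B i o j) (_root_.giveItem A i o j) ↔
      inst.WPref j (B j) (A j)) ∧
      (inst.SPref j (_root_.giveItem B i o j) (_root_.giveItem A i o j) ↔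
        inst.SPref j (B j) (A j)) := by
    intro j
    rcases eq_or_ne j i with rfl | hji
    · let := inst.ord j
      simp only [_root_.giveItem, update_self, wPref_iff_toColex_le hch,
        sPref_iff_toColex_lt hch, toColex_insert_le_insert_iff (hB j) (hA j),
        toColex_insert_lt_insert_iff (hB j) (hA j), and_self]
    · simp [_root_.giveItem, hji]
  obtain ⟨k, hk⟩ := h.2
  exact ⟨fun j => (key j).1.mpr (h.1 j), k, (key k).2.mpr hk⟩

theorem ParetoDominates.erase_of_giveItem (hch : inst.ChoresOnly)
    (hmin : letI := inst.ord i; ∀ x ∈ B i, o ≤ x) (ho : ∃ j, o ∈ B j) (hA : ∀ j, o ∉ A j)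
    (h : inst.ParetoDominates B (_root_.giveItem A i o)) :
    inst.ParetoDominates (fun j => (B j).erase o) A := by
  have herase : ∀ j, letI := inst.ord j; toColex ((B j).erase o) ≤ toColex (B j) :=
    fun j => by let := inst.ord j; exact toColex_le_toColex_of_subset (erase_subset o _)
  refine ⟨fun j => ?_, ?_⟩
  · have hj := h.1 j
    rcases eq_or_ne j i with rfl | hji
    · let := inst.ord j
      rw [wPref_iff_toColex_le hch] at hj ⊢
      simp only [_root_.giveItem, update_self] at hj
      exact toColex_erase_le_of_le_insert hmin (hA j) hj
    · let := inst.ord j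
      rw [wPref_iff_toColex_le hch] at hj ⊢
      simp only [_root_.giveItem, update_of_ne hji] at hj
      exact (herase j).trans hj
  obtain ⟨k, hk⟩ := h.2
  rcases eq_or_ne k i with rfl | hki
  · by_cases hok : o ∈ B k
    · refine ⟨k, ?_⟩
      let := inst.ord k
      rw [sPref_iff_toColex_lt hch] at hk ⊢
      simp only [_root_.giveItem, update_self] at hk
      rwa [← insert_erase hok, toColex_insert_lt_insert_iff (notMem_erase o _) (hA k)] at hk
    · obtain ⟨j, hj⟩ := ho
      have hjk : j ≠ k := fun h => hok (h ▸ hj)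
      refine ⟨j, ?_⟩
      have hle := h.1 j
      let := inst.ord j
      rw [sPref_iff_toColex_lt hch]
      rw [wPref_iff_toColex_le hch] at hle
      simp only [_root_.giveItem, update_of_ne hjk] at hle
      exact (toColex_erase_lt hj).trans_le hle
  · refine ⟨k, ?_⟩
    let := inst.ord k
    rw [sPref_iff_toColex_lt hch] at hk ⊢
    simp only [_root_.giveItem, update_of_ne hki] at hk
    exact (herase k).trans_lt hk

theorem paretoOptimalOn_runPick (hch : inst.ChoresOnly) (s : List N) (R : Finset M) :
    inst.ParetoOptimalOn R (inst.runPick s R) := by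
  induction s generalizing R with
  | nil => simpa [ParetoOptimalOn, runPick] using fun B _ => not_paretoDominates_empty hch
  | cons i s ih =>
    intro B hB hdom
    by_cases hR : R.Nonempty
    · rw [runPick_cons hR] at hdom
      set o := inst.pickOne i R hR
      have hoA : ∀ j, o ∉ inst.runPick s (R.erase o) j :=
        fun j h => (mem_erase.mp (runPick_subset s _ j h)).1 rfl
      exact ih (R.erase o) _ (hB.erase o) <| hdom.erase_of_giveItem hch
        (fun x hx => pickOne_le hch hR (hB.1 i hx)) (hB.2.1 o (pickOne_mem hR)) hoA
    · rw [runPick_of_not_nonempty hR] at hdom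
      exact not_paretoDominates_empty hch hdom

theorem exists_pickOne_mem (hch : inst.ChoresOnly) (hA : IsAllocationOn R A)
    (hpo : inst.ParetoOptimalOn R A) (hR : R.Nonempty) : ∃ i, inst.pickOne i R hR ∈ A i := by
  by_contra! hnot
  set m : N → M := fun j => inst.pickOne j R hR
  choose φ hφ using fun j => hA.2.1 (m j) (pickOne_mem hR)
  have : Nonempty N := let ⟨_, ho⟩ := hR; let ⟨j, _⟩ := hA.2.1 _ ho; ⟨j⟩
  have hS := bijOn_periodicPts φ
  obtain ⟨j₀, hj₀⟩ := periodicPts_nonempty φ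
  have hlt : ∀ j ∈ periodicPts φ, inst.SPref j (tradeAlong A m (periodicPts φ) j) (A j) := by
    intro j hj
    obtain ⟨p, hp, rfl⟩ := hS.surjOn hj
    let := inst.ord (φ p)
    rw [sPref_iff_toColex_lt hch, tradeAlong, if_pos hj]
    exact toColex_insert_filter_lt (hnot _) (fun x hx => pickOne_le hch hR (hA.1 _ hx)) (hφ p)
      (by simpa using ⟨p, hp, rfl⟩)
  refine hpo _ (isAllocationOn_tradeAlong hA hφ hS.mapsTo hS.injOn) ⟨fun j => ?_, j₀, hlt j₀ hj₀⟩
  by_cases hj : j ∈ periodicPts φ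
  · exact Or.inl (hlt j hj)
  · exact Or.inr (if_neg hj)

theorem ParetoOptimalOn.erase (hch : inst.ChoresOnly) (hA : IsAllocationOn R A)
    (hpo : inst.ParetoOptimalOn R A) (ho : o ∈ A i) :
    inst.ParetoOptimalOn (R.erase o) fun j => (A j).erase o := by
  intro B hB hdom
  have hoB : ∀ j, o ∉ B j := fun j h => (mem_erase.mp (hB.1 j h)).1 rfl
  refine hpo _ (isAllocationOn_giveItem hB (hA.1 i ho) i) ?_
  rw [hA.eq_giveItem_erase ho]
  exact hdom.giveItem hch hoB (fun j => notMem_erase o (A j)) i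

theorem exists_runPick_eq (hch : inst.ChoresOnly) (n : ℕ) :
    ∀ R A, R.card = n → IsAllocationOn R A → inst.ParetoOptimalOn R A →
      ∃ s : List N, s.length = n ∧ inst.runPick s R = A := by
  induction n with
  | zero =>
    intro R A hcard hA _
    refine ⟨[], rfl, funext fun j => ?_⟩
    rw [card_eq_zero.mp hcard] at hA
    simp [runPick, subset_empty.mp (hA.1 j)]
  | succ n ih =>
    intro R A hcard hA hpo
    have hR : R.Nonempty := card_pos.mp (by omega)
    obtain ⟨i, hi⟩ := exists_pickOne_mem hch hA hpo hR
    obtain ⟨s, hs, hrun⟩ := ih (R.erase _) _ (by rw [card_erase_of_mem (pickOne_mem hR)]; omega)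
      (hA.erase _) (hpo.erase hch hA hi)
    exact ⟨i :: s, by simp [hs], by rw [runPick_cons hR, hrun, ← hA.eq_giveItem_erase hi]⟩

end LexInstance

/-- In a chores-only lexicographic instance, a complete allocation
is Pareto optimal if and only if it is sequencible. -/
theorem po_iff_sequencible_chores
    {N M : Type} [Fintype N] [Fintype M] [DecidableEq M]
    (inst : LexInstance N M) (hch : inst.ChoresOnly)
    (A : N → Finset M) (hA : inst.IsAllocation A) :
    inst.ParetoOptimal A ↔ inst.Sequencible A := by
  rw [LexInstance.paretoOptimal_iff_paretoOptimalOn_univ]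
  constructor
  · intro hpo
    exact LexInstance.exists_runPick_eq hch _ univ A card_univ
      (LexInstance.isAllocationOn_univ_iff.mpr hA) hpo
  · rintro ⟨s, -, rfl⟩
    exact LexInstance.paretoOptimalOn_runPick hch s univ
end

section
/- Consider the lexicographic instance with agents N = {1,2}, items M = {o1,o2,o3}, goods G_1 = G_2 = {o1,o2} and chores C_1 = C_2 = {o3}, and importance orders o1 ⊳_1 o2 ⊳_1 o3 and o3 ⊳_2 o1 ⊳_2 o2. The allocation A_1 = {o1}, A_2 = {o2,o3} is sequencible (it is produced by the picking sequence 1,2,2) but is not Pareto optimal (it is Pareto dominated by the allocation giving all three items to agent 1). Hence for mixed items sequencibility does not imply Pareto optimality, even for objective instances. -/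
/-! Along the sequence `1, 2, 2`, agent 1 takes its best good `o1`, agent 2 its best remaining good
`o2`, and then, with no goods left, the only remaining item, the chore `o3`. Giving everything to
agent 1 instead adds the good `o2` to agent 1's bundle and takes the chore `o3` (and `o2`) away from
agent 2. Both agents gain strictly: lexicographically, a superset containing a new good, and a
subset missing a chore, are always strictly preferred. -/

attribute [local instance 10] Classical.propDecidable

/-- The instance with two agents, goods `o1, o2` and chore `o3` (items are
`0, 1, 2` standing for `o1, o2, o3`), importance orders
`o1 ⊳₁ o2 ⊳₁ o3` and `o3 ⊳₂ o1 ⊳₂ o2`. -/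
def inst2 : LexInstance (Fin 2) (Fin 3) where
  G := fun _ => {0, 1}
  ord := ![mkOrd ![2, 1, 0] (by decide), mkOrd ![1, 0, 2] (by decide)]

/-- The allocation `A₁ = {o1}`, `A₂ = {o2, o3}`. -/
def alloc2 : Fin 2 → Finset (Fin 3) := ![{0}, {1, 2}]

namespace LexInstance

variable {N M : Type} [Fintype N] [Fintype M] [DecidableEq M] (inst : LexInstance N M)

theorem pickOne_eq_of_good {i : N} {R : Finset M} (h : R.Nonempty) {g : M}
    (hg : g ∈ R ∩ inst.G i) (hmax : ∀ o ∈ R ∩ inst.G i, ¬ inst.imp i o g) :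
    inst.pickOne i R h = g := by
  let _ : LinearOrder M := inst.ord i
  rw [pickOne, dif_pos ⟨g, hg⟩]
  exact le_antisymm (Finset.max'_le _ _ _ fun o ho => not_lt.1 (hmax o ho))
    (Finset.le_max' _ _ hg)

theorem pickOne_eq_of_chore {i : N} {R : Finset M} (h : R.Nonempty) (hR : R ∩ inst.G i = ∅)
    {c : M} (hc : c ∈ R) (hmin : ∀ o ∈ R, ¬ inst.imp i c o) :
    inst.pickOne i R h = c := by
  let _ : LinearOrder M := inst.ord i
  rw [pickOne, dif_neg (by simp [hR])]
  exact le_antisymm (Finset.min'_le _ _ hc)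
    (Finset.le_min' _ _ _ fun o ho => not_lt.1 (hmin o ho))

theorem runPick_cons_of_pickOne_eq {i : N} {s : List N} {R : Finset M} (h : R.Nonempty) {o : M}
    (ho : inst.pickOne i R h = o) :
    inst.runPick (i :: s) R =
      fun j => inst.runPick s (R.erase o) j ∪ if j = i then {o} else ∅ := by
  rw [runPick, dif_pos h, ho]

theorem sPref_of_subset_of_good {i : N} {X Y : Finset M} (hYX : Y ⊆ X) {g : M}
    (hg : g ∈ inst.G i) (hgX : g ∈ X) (hgY : g ∉ Y) : inst.SPref i X Y :=
  Or.inl ⟨g, by simp [hg, hgX, hgY], fun o ho _ => hYX (Finset.mem_inter.1 ho).1⟩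

theorem sPref_of_subset_of_chore {i : N} {X Y : Finset M} (hXY : X ⊆ Y) {c : M}
    (hc : c ∈ inst.C i) (hcY : c ∈ Y) (hcX : c ∉ X) : inst.SPref i X Y :=
  Or.inr ⟨c, by simp [hc, hcY, hcX], fun o ho _ => hXY (Finset.mem_inter.1 ho).1⟩

end LexInstance

open LexInstance

theorem inst2_imp_iff {i : Fin 2} {a b : Fin 3} :
    inst2.imp i a b ↔ ![![2, 1, 0], ![1, 0, 2]] i b < ![![2, 1, 0], ![1, 0, 2]] i a := by
  fin_cases i <;> rfl

theorem runPick_inst2 : inst2.runPick [0, 1, 1] Finset.univ = alloc2 := by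
  rw [runPick_cons_of_pickOne_eq _ ⟨0, by simp⟩
      (pickOne_eq_of_good _ _ (g := 0) (by decide) (by simp only [inst2_imp_iff]; decide)),
    runPick_cons_of_pickOne_eq _ ⟨1, by decide⟩
      (pickOne_eq_of_good _ _ (g := 1) (by decide) (by simp only [inst2_imp_iff]; decide)),
    runPick_cons_of_pickOne_eq _ ⟨2, by decide⟩
      (pickOne_eq_of_chore _ _ (by decide) (c := 2) (by decide)
        (by simp only [inst2_imp_iff]; decide))]
  funext j
  fin_cases j
  · simp [runPick, alloc2]
  · simp [runPick, alloc2, Finset.pair_comm]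

theorem isAllocation_all_to_first : inst2.IsAllocation ![Finset.univ, ∅] := by
  refine ⟨fun i j hij => ?_, fun o => ⟨0, Finset.mem_univ o⟩⟩
  fin_cases i <;> fin_cases j <;> simp_all

/-- the allocation `A₁ = {o1}`, `A₂ = {o2,o3}` is produced by the
picking sequence `1,2,2`, hence sequencible, but is not Pareto optimal (it is
Pareto dominated by giving all items to agent 1).  So for mixed items
sequencibility does not imply Pareto optimality, even for objective instances. -/
theorem sequencible_not_po :
    inst2.runPick [0, 1, 1] Finset.univ = alloc2 ∧
    inst2.Sequencible alloc2 ∧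
    (inst2.IsAllocation ![Finset.univ, ∅] ∧
      (∀ i, inst2.WPref i (![(Finset.univ : Finset (Fin 3)), ∅] i) (alloc2 i)) ∧
      inst2.SPref 0 Finset.univ (alloc2 0)) ∧
    ¬ inst2.ParetoOptimal alloc2 := by
  have gain0 : inst2.SPref 0 Finset.univ (alloc2 0) :=
    sPref_of_subset_of_good _ (Finset.subset_univ _) (g := 1) (by decide) (by simp) (by decide)
  have gain1 : inst2.SPref 1 ∅ (alloc2 1) :=
    sPref_of_subset_of_chore _ (Finset.empty_subset _) (c := 2) (by decide) (by decide) (by simp)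
  have hweak : ∀ i, inst2.WPref i (![(Finset.univ : Finset (Fin 3)), ∅] i) (alloc2 i) := by
    intro i
    fin_cases i
    exacts [Or.inl gain0, Or.inl gain1]
  exact ⟨runPick_inst2, ⟨[0, 1, 1], rfl, runPick_inst2⟩,
    ⟨isAllocation_all_to_first, hweak, gain0⟩,
    fun hpo => hpo ⟨_, isAllocation_all_to_first, hweak, 0, gain0⟩⟩
end

section
/- Let ⟨N,M,G,C,⊳⟩ be any lexicographic mixed instance without any common chore, i.e., for every item o ∈ M there exists an agent i with o ∈ G_i. Then there exists a complete allocation that is simultaneously EFX and Pareto optimal. -/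
attribute [local instance 10] Classical.propDecidable

section EFXPOAux

open Finset

attribute [local instance 10] Classical.propDecidable

namespace EFXPO

set_option linter.unusedSectionVars false
set_option linter.unusedVariables false

variable {N M : Type} [Fintype N] [Fintype M] [DecidableEq M] [Nonempty N]

/-- enumeration of the agents -/
noncomputable def en (N : Type) [Fintype N] : Fin (Fintype.card N) ≃ N :=
  (Fintype.equivFin N).symm

/-- the agent at position `k` (junk for `k ≥ card N`). -/
noncomputable def ag (N : Type) [Fintype N] [Nonempty N] (k : ℕ) : N :=
  if h : k < Fintype.card N then en N ⟨k, h⟩ else Classical.arbitrary N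

lemma ag_en (k : ℕ) (h : k < Fintype.card N) : ag N k = en N ⟨k, h⟩ := dif_pos h

lemma en_symm_ag (k : ℕ) (h : k < Fintype.card N) :
    ((en N).symm (ag N k) : ℕ) = k := by
  rw [ag_en k h, Equiv.symm_apply_apply]

lemma ag_pos (i : N) : ag N ((en N).symm i : ℕ) = i := by
  rw [ag_en _ (((en N).symm i).isLt)]
  simp

/-- what agent `i` picks from remaining set `R` : its top remaining good, if any. -/
noncomputable def chosen (inst : LexInstance N M) (i : N) (R : Finset M) : Finset M :=
  if h : (inst.G i ∩ R).Nonempty then {@Finset.max' M (inst.ord i) _ h} else ∅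

lemma chosen_subset (inst : LexInstance N M) (i : N) (R : Finset M) :
    chosen inst i R ⊆ inst.G i ∩ R := by
  unfold chosen
  split_ifs with h
  · intro x hx
    rw [mem_singleton] at hx
    subst hx
    exact @Finset.max'_mem M (inst.ord i) _ h
  · exact empty_subset _

lemma chosen_card (inst : LexInstance N M) (i : N) (R : Finset M) :
    (chosen inst i R).card ≤ 1 := by
  unfold chosen
  split_ifs with h
  · simp
  · simp

lemma chosen_not_imp (inst : LexInstance N M) (i : N) (R : Finset M)
    {x y : M} (hx : x ∈ chosen inst i R) (hy : y ∈ inst.G i ∩ R) :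
    ¬ inst.imp i y x := by
  unfold chosen at hx
  split_ifs at hx with h
  · rw [mem_singleton] at hx
    subst hx
    have : (inst.ord i).le y (@Finset.max' M (inst.ord i) _ h) :=
      @Finset.le_max' M (inst.ord i) _ y hy
    intro hc
    exact absurd this (@not_le_of_gt M (inst.ord i).toPreorder _ _ hc)
  · exact absurd hx (notMem_empty _)

lemma chosen_nonempty (inst : LexInstance N M) (i : N) (R : Finset M)
    (h : (inst.G i ∩ R).Nonempty) : (chosen inst i R).Nonempty := by
  unfold chosen
  rw [dif_pos h]
  exact singleton_nonempty _

/-- remaining items after the first `k` picks. -/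
noncomputable def rem (inst : LexInstance N M) : ℕ → Finset M
  | 0 => Finset.univ
  | k + 1 => rem inst k \ chosen inst (ag N k) (rem inst k)

/-- the set (∅ or singleton) picked at step `k`. -/
noncomputable def pset (inst : LexInstance N M) (k : ℕ) : Finset M :=
  chosen inst (ag N k) (rem inst k)

lemma rem_succ (inst : LexInstance N M) (k : ℕ) :
    rem inst (k + 1) = rem inst k \ pset inst k := rfl

lemma rem_antitone (inst : LexInstance N M) {k l : ℕ} (h : k ≤ l) :
    rem inst l ⊆ rem inst k := by
  induction l with
  | zero => simp_all
  | succ l ih =>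
    rcases Nat.lt_or_ge k (l+1) with h' | h'
    · exact (sdiff_subset).trans (ih (Nat.lt_succ_iff.mp h'))
    · have : k = l + 1 := le_antisymm h h'
      subst this; exact subset_rfl

lemma pset_sub_rem (inst : LexInstance N M) (k : ℕ) :
    pset inst k ⊆ rem inst k :=
  (chosen_subset inst _ _).trans (inter_subset_right)

lemma pset_sub_G (inst : LexInstance N M) (k : ℕ) :
    pset inst k ⊆ inst.G (ag N k) :=
  (chosen_subset inst _ _).trans (inter_subset_left)

lemma pset_disj_rem (inst : LexInstance N M) {k l : ℕ} (h : k < l) :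
    Disjoint (pset inst k) (rem inst l) := by
  have h1 : rem inst l ⊆ rem inst (k+1) := rem_antitone inst h
  rw [rem_succ] at h1
  exact disjoint_left.mpr fun a ha hb => (mem_sdiff.mp (h1 hb)).2 ha

lemma pset_disjoint (inst : LexInstance N M) {k l : ℕ} (h : k < l) :
    Disjoint (pset inst k) (pset inst l) :=
  (pset_disj_rem inst h).mono_right (pset_sub_rem inst l)

lemma not_rem (inst : LexInstance N M) {o : M} {k : ℕ} (h : o ∉ rem inst k) :
    ∃ j < k, o ∈ pset inst j := by
  induction k with
  | zero => exact absurd (mem_univ o) h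
  | succ k ih =>
    by_cases h' : o ∈ rem inst k
    · refine ⟨k, Nat.lt_succ_self k, ?_⟩
      rw [rem_succ, mem_sdiff] at h
      by_contra hc
      exact h ⟨h', hc⟩
    · obtain ⟨j, hj, hjo⟩ := ih h'
      exact ⟨j, hj.trans (Nat.lt_succ_self k), hjo⟩

/-- positions (in the enumeration) of agents having `o` among their goods. -/
noncomputable def covs (inst : LexInstance N M) (o : M) : Finset (Fin (Fintype.card N)) :=
  Finset.univ.filter fun k => o ∈ inst.G (en N k)

lemma covs_nonempty (inst : LexInstance N M) (hnc : ∀ o : M, ∃ i, o ∈ inst.G i) (o : M) :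
    (covs inst o).Nonempty := by
  obtain ⟨i, hi⟩ := hnc o
  exact ⟨(en N).symm i, by simp [covs, hi]⟩

/-- the owner of leftover item `o` : the latest agent having `o` as a good. -/
noncomputable def fo (inst : LexInstance N M) (o : M) : N :=
  if h : (covs inst o).Nonempty then en N ((covs inst o).max' h) else Classical.arbitrary N

lemma fo_good (inst : LexInstance N M) (hnc : ∀ o : M, ∃ i, o ∈ inst.G i) (o : M) :
    o ∈ inst.G (fo inst o) := by
  unfold fo
  rw [dif_pos (covs_nonempty inst hnc o)]
  have := Finset.max'_mem _ (covs_nonempty inst hnc o)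
  unfold covs at this
  exact (Finset.mem_filter.mp this).2

lemma fo_max (inst : LexInstance N M) (hnc : ∀ o : M, ∃ i, o ∈ inst.G i)
    {o : M} {i : N} (h : o ∈ inst.G i) :
    ((en N).symm i : ℕ) ≤ ((en N).symm (fo inst o) : ℕ) := by
  unfold fo
  rw [dif_pos (covs_nonempty inst hnc o), Equiv.symm_apply_apply]
  have hmem : (en N).symm i ∈ covs inst o := by
    unfold covs
    rw [Finset.mem_filter]
    exact ⟨Finset.mem_univ _, by simpa using h⟩
  exact Fin.le_def.mp (Finset.le_max' _ _ hmem)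

/-- the allocation. -/
noncomputable def alloc (inst : LexInstance N M) (i : N) : Finset M :=
  pset inst ((en N).symm i : ℕ) ∪
    (rem inst (Fintype.card N)).filter fun o => fo inst o = i

lemma pset_sub_alloc (inst : LexInstance N M) (i : N) :
    pset inst ((en N).symm i : ℕ) ⊆ alloc inst i := subset_union_left

lemma pset_sub_alloc' (inst : LexInstance N M) (k : ℕ) (hk : k < Fintype.card N) :
    pset inst k ⊆ alloc inst (ag N k) := by
  have := pset_sub_alloc inst (ag N k)
  rwa [en_symm_ag k hk] at this

lemma left_sub_alloc (inst : LexInstance N M) {o : M} (ho : o ∈ rem inst (Fintype.card N)) :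
    o ∈ alloc inst (fo inst o) :=
  mem_union_right _ (mem_filter.mpr ⟨ho, rfl⟩)

lemma alloc_sub_G (inst : LexInstance N M) (hnc : ∀ o : M, ∃ i, o ∈ inst.G i) (i : N) :
    alloc inst i ⊆ inst.G i := by
  intro x hx
  rcases mem_union.mp hx with hx | hx
  · have := pset_sub_G inst ((en N).symm i : ℕ) hx
    rwa [ag_pos i] at this
  · obtain ⟨-, hfo⟩ := mem_filter.mp hx
    rw [← hfo]
    exact fo_good inst hnc x

lemma alloc_disjoint (inst : LexInstance N M) {i j : N} (hij : i ≠ j) :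
    Disjoint (alloc inst i) (alloc inst j) := by
  rw [disjoint_left]
  intro a hai haj
  rcases mem_union.mp hai with ha | ha <;> rcases mem_union.mp haj with hb | hb
  · have hne : ((en N).symm i : ℕ) ≠ ((en N).symm j : ℕ) := by
      intro h
      exact hij ((en N).symm.injective (Fin.ext h))
    rcases hne.lt_or_gt with h | h
    · exact (disjoint_left.mp (pset_disjoint inst h)) ha hb
    · exact (disjoint_left.mp (pset_disjoint inst h)) hb ha
  · exact (disjoint_left.mp (pset_disj_rem inst ((en N).symm i).isLt)) ha (mem_filter.mp hb).1
  · exact (disjoint_left.mp (pset_disj_rem inst ((en N).symm j).isLt)) hb (mem_filter.mp ha).1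
  · exact hij ((mem_filter.mp ha).2.symm.trans (mem_filter.mp hb).2)

lemma alloc_isAllocation (inst : LexInstance N M) (hnc : ∀ o : M, ∃ i, o ∈ inst.G i) :
    inst.IsAllocation (alloc inst) := by
  constructor
  · exact fun i j h => alloc_disjoint inst h
  · intro o
    by_cases h : o ∈ rem inst (Fintype.card N)
    · exact ⟨fo inst o, left_sub_alloc inst h⟩
    · obtain ⟨j, hj, hjo⟩ := not_rem inst h
      exact ⟨ag N j, pset_sub_alloc' inst j hj hjo⟩

lemma pset_card (inst : LexInstance N M) (k : ℕ) : (pset inst k).card ≤ 1 :=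
  chosen_card inst _ _

lemma spref_chore (inst : LexInstance N M) {i : N} {X Y : Finset M}
    (hX : X ⊆ inst.G i) {c : M} (hcY : c ∈ Y) (hcG : c ∉ inst.G i) :
    inst.SPref i X Y := by
  right
  refine ⟨c, ?_, ?_⟩
  · rw [Finset.mem_inter, Finset.mem_sdiff]
    refine ⟨?_, hcY, fun h => hcG (hX h)⟩
    unfold LexInstance.C
    exact Finset.mem_compl.mpr hcG
  · intro o ho _
    exfalso
    obtain ⟨h1, h2⟩ := Finset.mem_inter.mp ho
    unfold LexInstance.C at h2
    exact (Finset.mem_compl.mp h2) (hX h1)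

lemma improve_witness (inst : LexInstance N M) {i : N} {X Y : Finset M}
    (hY : Y ⊆ inst.G i) (hW : inst.WPref i X Y) {a : M} (ha : a ∈ Y) (hna : a ∉ X) :
    ∃ g, g ∈ inst.G i ∧ g ∈ X ∧ g ∉ Y ∧ ¬ inst.imp i a g := by
  rcases hW with hS | rfl
  · rcases hS with ⟨g, hg, hcl⟩ | ⟨c, hc, -⟩
    · obtain ⟨hgG, hgXY⟩ := Finset.mem_inter.mp hg
      obtain ⟨hgX, hgY⟩ := Finset.mem_sdiff.mp hgXY
      refine ⟨g, hgG, hgX, hgY, fun himp => hna ?_⟩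
      exact hcl a (Finset.mem_inter.mpr ⟨ha, hY ha⟩) himp
    · exfalso
      obtain ⟨hcC, hcYX⟩ := Finset.mem_inter.mp hc
      unfold LexInstance.C at hcC
      exact (Finset.mem_compl.mp hcC) (hY (Finset.mem_sdiff.mp hcYX).1)
  · exact absurd ha hna

lemma alloc_efx (inst : LexInstance N M) (hnc : ∀ o : M, ∃ i, o ∈ inst.G i) :
    inst.EFX (alloc inst) := by
  intro i h
  constructor
  · intro o ho
    obtain ⟨hoAh, hoG⟩ := Finset.mem_inter.mp ho
    by_cases hih : i = h
    · subst hih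
      left
      left
      refine ⟨o, ?_, ?_⟩
      · rw [Finset.mem_inter, Finset.mem_sdiff]
        exact ⟨hoG, hoAh, Finset.notMem_erase o _⟩
      · intro o' ho' _
        exact Finset.erase_subset _ _ (Finset.mem_inter.mp ho').1
    · set Y := (alloc inst h).erase o with hYdef
      by_cases hch : ∃ c ∈ Y, c ∉ inst.G i
      · obtain ⟨c, hcY, hcG⟩ := hch
        exact Or.inl (spref_chore inst (alloc_sub_G inst hnc i) hcY hcG)
      · push_neg at hch
        by_cases hYe : Y = ∅
        · by_cases hAi : alloc inst i = ∅
          · right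
            rw [hAi, hYe]
          · left
            left
            obtain ⟨g, hg⟩ := Finset.nonempty_iff_ne_empty.mpr hAi
            refine ⟨g, ?_, ?_⟩
            · rw [Finset.mem_inter, Finset.mem_sdiff]
              exact ⟨alloc_sub_G inst hnc i hg, hg, by rw [hYe]; exact Finset.notMem_empty g⟩
            · intro o' ho' _
              exact absurd (Finset.mem_inter.mp ho').1 (by rw [hYe]; exact Finset.notMem_empty o')
        · have hYne : Y.Nonempty := Finset.nonempty_iff_ne_empty.mpr hYe
          have hYrem : ∀ y ∈ Y, y ∈ rem inst ((en N).symm i : ℕ) := by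
            intro y hy
            have hyAh : y ∈ alloc inst h := Finset.erase_subset _ _ hy
            have hyo : y ≠ o := (Finset.mem_erase.mp hy).1
            rcases Finset.mem_union.mp hyAh with hyp | hyl
            · rcases le_or_gt ((en N).symm i : ℕ) ((en N).symm h : ℕ) with hle | hlt
              · exact rem_antitone inst hle (pset_sub_rem inst _ hyp)
              · exfalso
                rcases Finset.mem_union.mp hoAh with hop | hol
                · exact hyo (Finset.card_le_one.mp (pset_card inst _) y hyp o hop)
                · have hfo : fo inst o = h := (Finset.mem_filter.mp hol).2
                  have := fo_max inst hnc hoG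
                  rw [hfo] at this
                  exact absurd this (Nat.not_le_of_lt hlt)
            · exact rem_antitone inst (Nat.le_of_lt ((en N).symm i).isLt)
                (Finset.mem_filter.mp hyl).1
          have hGr : (inst.G i ∩ rem inst ((en N).symm i : ℕ)).Nonempty := by
            obtain ⟨y, hy⟩ := hYne
            exact ⟨y, Finset.mem_inter.mpr ⟨hch y hy, hYrem y hy⟩⟩
          obtain ⟨x, hx⟩ := chosen_nonempty inst i _ hGr
          have hxp : x ∈ pset inst ((en N).symm i : ℕ) := by
            unfold pset
            rw [ag_pos i]
            exact hx
          have hxA : x ∈ alloc inst i := pset_sub_alloc inst i hxp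
          have hxG : x ∈ inst.G i := (Finset.mem_inter.mp (chosen_subset inst i _ hx)).1
          left
          left
          refine ⟨x, ?_, ?_⟩
          · rw [Finset.mem_inter, Finset.mem_sdiff]
            refine ⟨hxG, hxA, fun hxY => ?_⟩
            exact Finset.disjoint_left.mp (alloc_disjoint inst hih) hxA
              (Finset.erase_subset _ _ hxY)
          · intro o' ho' himp
            exfalso
            obtain ⟨ho'Y, ho'G⟩ := Finset.mem_inter.mp ho'
            exact chosen_not_imp inst i _ hx
              (Finset.mem_inter.mpr ⟨ho'G, hYrem o' ho'Y⟩) himp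
  · intro o ho
    exfalso
    obtain ⟨h1, h2⟩ := Finset.mem_inter.mp ho
    unfold LexInstance.C at h2
    exact (Finset.mem_compl.mp h2) (alloc_sub_G inst hnc i h1)

lemma alloc_po (inst : LexInstance N M) (hnc : ∀ o : M, ∃ i, o ∈ inst.G i) :
    inst.ParetoOptimal (alloc inst) := by
  rintro ⟨B, hB, hW, h0, hs⟩
  have key : ∀ (i : N) (a : M), a ∈ alloc inst i → a ∉ B i →
      ∃ g, g ∈ inst.G i ∧ g ∈ B i ∧ g ∉ alloc inst i ∧ ¬ inst.imp i a g :=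
    fun i a ha hna => improve_witness inst (alloc_sub_G inst hnc i) (hW i) ha hna
  have claim1 : ∀ k, k < Fintype.card N → pset inst k ⊆ B (ag N k) := by
    intro k
    induction k using Nat.strong_induction_on with
    | _ k ih =>
      intro hk x hx
      by_contra hxB
      have hxA : x ∈ alloc inst (ag N k) := pset_sub_alloc' inst k hk hx
      obtain ⟨g, hgG, hgB, hgA, hni⟩ := key _ _ hxA hxB
      by_cases hgr : g ∈ rem inst k
      · have h1 : ¬ inst.imp (ag N k) g x :=
          chosen_not_imp inst _ _ hx (Finset.mem_inter.mpr ⟨hgG, hgr⟩)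
        have hxg : x = g := by
          by_contra hne
          letI := inst.ord (ag N k)
          rcases lt_trichotomy x g with h' | h' | h'
          · exact h1 h'
          · exact hne h'
          · exact hni h'
        exact hgA (hxg ▸ hxA)
      · obtain ⟨j, hj, hgp⟩ := not_rem inst hgr
        have hgBj : g ∈ B (ag N j) := ih j hj (hj.trans hk) hgp
        have hne : ag N j ≠ ag N k := by
          intro hEq
          have h1 := en_symm_ag j (hj.trans hk)
          rw [hEq, en_symm_ag k hk] at h1
          exact absurd h1 (Nat.ne_of_lt hj).symm
        exact Finset.disjoint_left.mp (hB.1 _ _ hne) hgBj hgB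
  have claim2 : ∀ o ∈ rem inst (Fintype.card N), o ∈ B (fo inst o) := by
    by_contra hc
    push_neg at hc
    obtain ⟨o0, ho0, hno0⟩ := hc
    set T := (rem inst (Fintype.card N)).filter (fun o => o ∉ B (fo inst o)) with hTdef
    have hT : T.Nonempty := ⟨o0, Finset.mem_filter.mpr ⟨ho0, hno0⟩⟩
    obtain ⟨o, hoT, hmax⟩ :=
      Finset.exists_max_image T (fun o => ((en N).symm (fo inst o) : ℕ)) hT
    obtain ⟨hoL, hoB⟩ := Finset.mem_filter.mp hoT
    have hoA : o ∈ alloc inst (fo inst o) := left_sub_alloc inst hoL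
    obtain ⟨g, hgG, hgB, hgA, -⟩ := key _ _ hoA hoB
    by_cases hgr : g ∈ rem inst (Fintype.card N)
    · have hgAj : g ∈ alloc inst (fo inst g) := left_sub_alloc inst hgr
      have hji : fo inst g ≠ fo inst o := fun hEq => hgA (hEq ▸ hgAj)
      have hgBj : g ∉ B (fo inst g) := fun hBj =>
        Finset.disjoint_left.mp (hB.1 _ _ hji) hBj hgB
      have hgT : g ∈ T := Finset.mem_filter.mpr ⟨hgr, hgBj⟩
      have h1 := hmax g hgT
      have h2 := fo_max inst hnc hgG
      exact hji ((en N).symm.injective (Fin.ext (le_antisymm h1 h2)))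
    · obtain ⟨j, hj, hgp⟩ := not_rem inst hgr
      have hgBj : g ∈ B (ag N j) := claim1 j hj hgp
      by_cases hEq : ag N j = fo inst o
      · exact hgA (hEq ▸ pset_sub_alloc' inst j hj hgp)
      · exact Finset.disjoint_left.mp (hB.1 _ _ hEq) hgBj hgB
  have hsub : ∀ i, alloc inst i ⊆ B i := by
    intro i x hx
    rcases Finset.mem_union.mp hx with hx | hx
    · have h1 := claim1 ((en N).symm i : ℕ) ((en N).symm i).isLt hx
      rwa [ag_pos i] at h1
    · obtain ⟨hxL, hfo⟩ := Finset.mem_filter.mp hx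
      exact hfo ▸ claim2 x hxL
  have heq : ∀ i, B i = alloc inst i := by
    intro i
    refine Finset.Subset.antisymm ?_ (hsub i)
    intro x hx
    obtain ⟨j, hj⟩ := (alloc_isAllocation inst hnc).2 x
    by_cases hij : i = j
    · exact hij ▸ hj
    · exact absurd hx (fun hx' =>
        Finset.disjoint_left.mp (hB.1 i j hij) hx' (hsub j hj))
  rcases hs with ⟨g, hg, -⟩ | ⟨c, hc, -⟩
  · rw [heq h0] at hg
    obtain ⟨-, hg2⟩ := Finset.mem_inter.mp hg
    obtain ⟨h1, h2⟩ := Finset.mem_sdiff.mp hg2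
    exact h2 h1
  · rw [heq h0] at hc
    obtain ⟨-, hc2⟩ := Finset.mem_inter.mp hc
    obtain ⟨h1, h2⟩ := Finset.mem_sdiff.mp hc2
    exact h2 h1

end EFXPO

end EFXPOAux

/-- in a lexicographic mixed instance without any common chore
(every item is a good for some agent), an EFX and Pareto optimal complete
allocation exists. -/
theorem efx_po_exists_of_no_common_chore
    {N M : Type} [Fintype N] [Fintype M] [DecidableEq M] [Nonempty N]
    (inst : LexInstance N M) (hnc : ∀ o : M, ∃ i, o ∈ inst.G i) :
    ∃ A : N → Finset M, inst.IsAllocation A ∧ inst.EFX A ∧ inst.ParetoOptimal A :=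
  ⟨EFXPO.alloc inst, EFXPO.alloc_isAllocation inst hnc, EFXPO.alloc_efx inst hnc,
    EFXPO.alloc_po inst hnc⟩
end

section
/- In a chores-only lexicographic instance, a complete allocation A is EFX if and only if every envious agent receives exactly one chore, i.e., for every agent i such that A_h ≻_i A_i for some agent h, |A_i| = 1. -/
attribute [local instance 10] Classical.propDecidable

/-- in a chores-only lexicographic instance, a complete
allocation is EFX iff every envious agent receives exactly one chore. -/
theorem efx_iff_envious_singleton_chores
    {N M : Type} [Fintype N] [Fintype M] [DecidableEq M]
    (inst : LexInstance N M) (hch : inst.ChoresOnly)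
    (A : N → Finset M) (hA : inst.IsAllocation A) :
    inst.EFX A ↔ ∀ i : N, (∃ h, inst.SPref i (A h) (A i)) → (A i).card = 1 := by
  have hCmem : ∀ (i : N) (o : M), o ∈ inst.C i := fun i o => by
    simp [LexInstance.C, hch i]
  have hGmem : ∀ (i : N) (o : M), o ∉ inst.G i := fun i o => by
    simp [hch i]
  -- simplified form of strict preference in a chores-only instance
  have hS : ∀ (i : N) (X Y : Finset M),
      inst.SPref i X Y ↔ ∃ c ∈ Y, c ∉ X ∧ ∀ o ∈ X, inst.imp i o c → o ∈ Y := by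
    intro i X Y
    constructor
    · rintro (⟨g, hg, _⟩ | ⟨c, hc, h2⟩)
      · exact absurd (Finset.mem_inter.1 hg).1 (hGmem i g)
      · rcases Finset.mem_inter.1 hc with ⟨_, hc2⟩
        rcases Finset.mem_sdiff.1 hc2 with ⟨hcY, hcX⟩
        exact ⟨c, hcY, hcX, fun o ho himp =>
          h2 o (Finset.mem_inter.2 ⟨ho, hCmem i o⟩) himp⟩
    · rintro ⟨c, hcY, hcX, h2⟩
      right
      exact ⟨c, Finset.mem_inter.2 ⟨hCmem i c, Finset.mem_sdiff.2 ⟨hcY, hcX⟩⟩,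
        fun o ho himp => h2 o (Finset.mem_inter.1 ho).1 himp⟩
  -- a strict subset is strictly preferred
  have hsub : ∀ (i : N) (X Y : Finset M), X ⊆ Y → (∃ c ∈ Y, c ∉ X) →
      inst.SPref i X Y := by
    rintro i X Y hXY ⟨c, hcY, hcX⟩
    exact (hS i X Y).2 ⟨c, hcY, hcX, fun o ho _ => hXY ho⟩
  -- totality of strict preference on distinct bundles
  have htot : ∀ (i : N) (X Y : Finset M), X ≠ Y →
      inst.SPref i X Y ∨ inst.SPref i Y X := by
    intro i X Y hne
    letI := inst.ord i
    have hsd : ((Y \ X) ∪ (X \ Y)).Nonempty := by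
      by_contra hemp
      rw [Finset.not_nonempty_iff_eq_empty, Finset.union_eq_empty,
        Finset.sdiff_eq_empty_iff_subset, Finset.sdiff_eq_empty_iff_subset] at hemp
      exact hne (Finset.Subset.antisymm hemp.2 hemp.1)
    set c := ((Y \ X) ∪ (X \ Y)).max' hsd with hc
    have hcmem := ((Y \ X) ∪ (X \ Y)).max'_mem hsd
    have hmax : ∀ o ∈ (Y \ X) ∪ (X \ Y), o ≤ c := fun o ho =>
      Finset.le_max' _ o ho
    rcases Finset.mem_union.1 hcmem with hcm | hcm
    · left
      rcases Finset.mem_sdiff.1 hcm with ⟨hcY, hcX⟩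
      refine (hS i X Y).2 ⟨c, hcY, hcX, fun o ho himp => ?_⟩
      by_contra hoY
      have : o ≤ c := hmax o (Finset.mem_union_right _ (Finset.mem_sdiff.2 ⟨ho, hoY⟩))
      exact absurd himp (not_lt.2 this)
    · right
      rcases Finset.mem_sdiff.1 hcm with ⟨hcX, hcY⟩
      refine (hS i Y X).2 ⟨c, hcX, hcY, fun o ho himp => ?_⟩
      by_contra hoX
      have : o ≤ c := hmax o (Finset.mem_union_left _ (Finset.mem_sdiff.2 ⟨ho, hoX⟩))
      exact absurd himp (not_lt.2 this)
  constructor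
  · -- EFX → envious agents get one chore
    intro hEFX i ⟨h, hPref⟩
    rcases (hS i (A h) (A i)).1 hPref with ⟨c, hcAi, hcAh, hdom⟩
    have hne : h ≠ i := by
      rintro rfl; exact hcAh hcAi
    have hdisj : Disjoint (A h) (A i) := hA.1 h i hne
    -- every element of A i equals c
    have huniq : ∀ o ∈ A i, o = c := by
      intro o ho
      by_contra honc
      have hEFX2 := (hEFX i h).2 o (Finset.mem_inter.2 ⟨ho, hCmem i o⟩)
      have hcErase : c ∈ (A i).erase o := Finset.mem_erase.2 ⟨fun hco => honc hco.symm, hcAi⟩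
      rcases hEFX2 with hsp | heq
      · rcases (hS i ((A i).erase o) (A h)).1 hsp with ⟨c', hc'Ah, _, hdom'⟩
        letI := inst.ord i
        have h1 : ¬ inst.imp i c c' := fun himp =>
          hcAh (hdom' c hcErase himp)
        have h2 : ¬ inst.imp i c' c := fun himp =>
          (Finset.disjoint_left.1 hdisj hc'Ah) (hdom c' hc'Ah himp)
        have hcc : c = c' := le_antisymm (not_lt.1 h1) (not_lt.1 h2)
        exact hcAh (by rw [hcc]; exact hc'Ah)
      · exact (Finset.disjoint_left.1 hdisj (heq ▸ hcErase)) hcAi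
    have : A i = {c} := Finset.eq_singleton_iff_unique_mem.2 ⟨hcAi, huniq⟩
    rw [this, Finset.card_singleton]
  · -- converse
    intro hyp i h
    constructor
    · intro o ho
      exact absurd (Finset.mem_inter.1 ho).2 (hGmem i o)
    · intro o ho'
      have ho : o ∈ A i := (Finset.mem_inter.1 ho').1
      by_cases henv : ∃ h', inst.SPref i (A h') (A i)
      · -- envious: A i = {o}, erase is empty
        have hcard := hyp i henv
        have hAi : A i = {o} := by
          rcases Finset.card_eq_one.1 hcard with ⟨a, ha⟩
          rw [ha] at ho ⊢
          rw [Finset.mem_singleton.1 ho]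
        have herase : (A i).erase o = ∅ := by rw [hAi, Finset.erase_singleton]
        rcases Finset.eq_empty_or_nonempty (A h) with hAh | ⟨b, hb⟩
        · right; rw [herase, hAh]
        · left
          refine (hS i _ _).2 ⟨b, hb, ?_, ?_⟩
          · rw [herase]; exact Finset.notMem_empty b
          · intro o' ho''; rw [herase] at ho''; exact absurd ho'' (Finset.notMem_empty o')
      · push_neg at henv
        by_cases hhi : h = i
        · subst hhi
          exact Or.inl (hsub _ _ _ (Finset.erase_subset o _)
            ⟨o, ho, Finset.notMem_erase o _⟩)
        · have hdisj : Disjoint (A h) (A i) := hA.1 h i hhi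
          have hneq : A h ≠ A i := by
            intro heq
            exact (Finset.disjoint_left.1 hdisj (heq ▸ ho)) ho
          have hPref : inst.SPref i (A i) (A h) :=
            (htot i (A h) (A i) hneq).resolve_left (henv h)
          rcases (hS i (A i) (A h)).1 hPref with ⟨c, hcAh, hcAi, hdom⟩
          left
          refine (hS i _ _).2 ⟨c, hcAh, fun hc => hcAi (Finset.mem_of_mem_erase hc), ?_⟩
          intro o' ho'' himp
          exact hdom o' (Finset.mem_of_mem_erase ho'') himp
end

section
/- Consider the chores-only lexicographic instance with four agents N = {1,2,3,4} and five chores M = {o1,…,o5}, with importance orders: agent 1: o5 ⊳ o4 ⊳ o3 ⊳ o2 ⊳ o1; agent 2: o5 ⊳ o4 ⊳ o3 ⊳ o2 ⊳ o1; agent 3: o5 ⊳ o3 ⊳ o2 ⊳ o1 ⊳ o4; agent 4: o4 ⊳ o3 ⊳ o2 ⊳ o1 ⊳ o5. The allocation A_1 = {o1}, A_2 = {o2,o3}, A_3 = {o4}, A_4 = {o5} satisfies MMS but is not EFX. Hence for chores under lexicographic preferences, MMS does not imply EFX. -/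
attribute [local instance 10] Classical.propDecidable

/-- The chores-only instance with four agents and five chores `0,…,4` standing
for `o1,…,o5`; agents 1,2: `o5 ⊳ o4 ⊳ o3 ⊳ o2 ⊳ o1`;
agent 3: `o5 ⊳ o3 ⊳ o2 ⊳ o1 ⊳ o4`; agent 4: `o4 ⊳ o3 ⊳ o2 ⊳ o1 ⊳ o5`. -/
def inst14 : LexInstance (Fin 4) (Fin 5) where
  G := fun _ => ∅
  ord := ![mkOrd ![0, 1, 2, 3, 4] (by decide),
           mkOrd ![0, 1, 2, 3, 4] (by decide),
           mkOrd ![1, 2, 3, 0, 4] (by decide),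
           mkOrd ![1, 2, 3, 4, 0] (by decide)]

/-- The allocation `A₁ = {o1}`, `A₂ = {o2,o3}`, `A₃ = {o4}`, `A₄ = {o5}`. -/
def alloc14 : Fin 4 → Finset (Fin 5) := ![{0}, {1, 2}, {3}, {4}]

/-!
Each agent's most important chore (`o5` for agents 1–3, `o4` for agent 4) lies outside its own
bundle. Every partition puts that chore into some bundle, and the agent's own bundle, containing
nothing more important, is lexicographically better than that bundle; so the allocation is MMS.
It is not EFX: agent 2, even after dropping `o2`, still holds `o3`, which it ranks above agent 1's
`o1`.
-/

namespace LexInstance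

variable {N M : Type} [Fintype N] [Fintype M] [DecidableEq M]

instance decidableImp (inst : LexInstance N M) (i : N) (a b : M) :
    Decidable (inst.imp i a b) :=
  (inst.ord i).toDecidableLT b a

instance decidableSPref (inst : LexInstance N M) (i : N) (X Y : Finset M) :
    Decidable (inst.SPref i X Y) := by
  unfold SPref; infer_instance

instance decidableWPref (inst : LexInstance N M) (i : N) (X Y : Finset M) :
    Decidable (inst.WPref i X Y) := by
  unfold WPref; infer_instance

theorem sPref_of_chore_mem_sdiff {inst : LexInstance N M} {i : N} {X Y : Finset M} {c : M}
    (hc : c ∈ inst.C i) (hcYX : c ∈ Y \ X) (hX : ∀ o ∈ X, ¬ inst.imp i o c) :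
    inst.SPref i X Y :=
  Or.inr ⟨c, Finset.mem_inter.2 ⟨hc, hcYX⟩,
    fun o ho himp => absurd himp (hX o (Finset.mem_inter.1 ho).1)⟩

theorem mmsFair_of_forall_exists_chore {inst : LexInstance N M} {A : N → Finset M}
    (h : ∀ i, ∃ c ∈ inst.C i, c ∉ A i ∧ ∀ o ∈ A i, ¬ inst.imp i o c) :
    inst.MMSfair A := by
  intro i P hP
  obtain ⟨c, hc, hcA, hA⟩ := h i
  obtain ⟨j, hcP⟩ := hP.2 c
  exact ⟨j, Or.inl (sPref_of_chore_mem_sdiff hc (Finset.mem_sdiff.2 ⟨hcP, hcA⟩) hA)⟩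

end LexInstance

/-- this allocation satisfies MMS but is not EFX; hence for
chores under lexicographic preferences MMS does not imply EFX. -/
theorem mms_not_efx_chores :
    inst14.IsAllocation alloc14 ∧ inst14.MMSfair alloc14 ∧ ¬ inst14.EFX alloc14 := by
  refine ⟨by unfold LexInstance.IsAllocation; decide,
    LexInstance.mmsFair_of_forall_exists_chore (by decide), ?_⟩
  have hEnvy : ¬ inst14.WPref 1 ((alloc14 1).erase 1) (alloc14 0) := by decide
  exact fun hEFX => hEnvy ((hEFX 1 0).2 1 (by decide))
end

section
/- Every chores-only lexicographic instance admits a complete allocation that simultaneously satisfies MMS and Pareto optimality. -/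
attribute [local instance 10] Classical.propDecidable

section Aux

variable {N M : Type} [Fintype N] [Fintype M] [DecidableEq M]

lemma spref_irrefl (inst : LexInstance N M) (i : N) (X : Finset M) :
    ¬ inst.SPref i X X := by
  rintro (⟨g, hg, -⟩ | ⟨c, hc, -⟩) <;> simp_all

lemma chores_spref (inst : LexInstance N M) (hch : inst.ChoresOnly) (i : N)
    (X Y : Finset M) :
    inst.SPref i X Y ↔ ∃ c ∈ Y \ X, ∀ o ∈ X, inst.imp i o c → o ∈ Y := by
  unfold LexInstance.SPref LexInstance.C
  rw [hch i]
  simp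

lemma wpref_empty (inst : LexInstance N M) (hch : inst.ChoresOnly) (i : N)
    (Y : Finset M) : inst.WPref i ∅ Y := by
  rcases Y.eq_empty_or_nonempty with h | h
  · exact Or.inr h.symm
  · obtain ⟨c, hc⟩ := h
    exact Or.inl ((chores_spref inst hch i ∅ Y).mpr
      ⟨c, by simp [hc], by simp⟩)

end Aux

/-- every chores-only lexicographic instance admits a complete
allocation that simultaneously satisfies MMS and Pareto optimality. -/
theorem mms_po_exists_chores
    {N M : Type} [Fintype N] [Fintype M] [DecidableEq M] [Nonempty N]
    (inst : LexInstance N M) (hch : inst.ChoresOnly) :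
    ∃ A : N → Finset M,
      inst.IsAllocation A ∧ inst.MMSfair A ∧ inst.ParetoOptimal A := by
  obtain ⟨a⟩ := ‹Nonempty N›
  rcases (Finset.univ : Finset M).eq_empty_or_nonempty with hM | hM
  · -- no items
    have hE : ∀ X : Finset M, X = ∅ := fun X =>
      Finset.eq_empty_of_forall_notMem fun x _ =>
        (Finset.eq_empty_iff_forall_notMem.mp hM x (Finset.mem_univ x))
    refine ⟨fun _ => ∅, ⟨fun i j _ => Finset.disjoint_empty_left _,
      fun o => absurd (Finset.mem_univ o)
        (Finset.eq_empty_iff_forall_notMem.mp hM o)⟩, ?_, ?_⟩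
    · intro i P _
      exact ⟨a, Or.inr (hE (P a)).symm⟩
    · rintro ⟨B, _, _, h, hsp⟩
      rw [hE (B h)] at hsp
      exact spref_irrefl inst h ∅ hsp
  · by_cases hb : ∃ b, b ≠ a
    · obtain ⟨b, hba⟩ := hb
      set t : M := @Finset.max' M (inst.ord a) Finset.univ hM with ht
      have ht_top : ∀ o : M, ¬ inst.imp a o t := by
        letI := inst.ord a
        intro o
        exact not_lt.mpr (Finset.le_max' _ o (Finset.mem_univ o))
      have ht_lt : ∀ c : M, c ≠ t → inst.imp a t c := by
        letI := inst.ord a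
        intro c hc
        exact lt_of_le_of_ne (Finset.le_max' _ c (Finset.mem_univ c)) hc
      set tb : M := @Finset.max' M (inst.ord b) Finset.univ hM with htb
      have htb_top : ∀ o : M, ¬ inst.imp b o tb := by
        letI := inst.ord b
        intro o
        exact not_lt.mpr (Finset.le_max' _ o (Finset.mem_univ o))
      set A : N → Finset M := fun i =>
        if i = a then Finset.univ.erase t else if i = b then {t} else ∅ with hA
      have hAa : A a = Finset.univ.erase t := by simp [hA]
      have hAb : A b = {t} := by simp [hA, hba]
      have hAo : ∀ i, i ≠ a → i ≠ b → A i = ∅ := by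
        intro i h1 h2; simp [hA, h1, h2]
      have hAlloc : inst.IsAllocation A := by
        constructor
        · intro i j hij
          simp only [hA]
          split_ifs <;>
            simp_all [Finset.disjoint_singleton_right, Finset.disjoint_singleton_left]
        · intro o
          by_cases ho : o = t
          · exact ⟨b, by simp [hA, hba, ho]⟩
          · exact ⟨a, by simp [hA, ho]⟩
      refine ⟨A, hAlloc, ?_, ?_⟩
      · -- MMS fairness
        intro i P hP
        by_cases hia : i = a
        · subst hia
          obtain ⟨j, hj⟩ := hP.2 t
          refine ⟨j, Or.inl ((chores_spref inst hch i _ _).mpr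
            ⟨t, by simp [hj, hAa], ?_⟩)⟩
          intro o ho him
          exact absurd him (ht_top o)
        · by_cases hib : i = b
          · subst hib
            obtain ⟨j, hj⟩ := hP.2 tb
            rw [hAb]
            by_cases hPj : P j = {t}
            · exact ⟨j, Or.inr hPj.symm⟩
            · by_cases htP : t ∈ P j
              · have hne : (P j \ {t}).Nonempty := by
                  rw [Finset.sdiff_nonempty]
                  intro hsub
                  exact hPj (Finset.Subset.antisymm hsub (Finset.singleton_subset_iff.mpr htP))
                obtain ⟨c, hc⟩ := hne
                refine ⟨j, Or.inl ((chores_spref inst hch i _ _).mpr ⟨c, hc, ?_⟩)⟩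
                intro o ho _
                rw [Finset.mem_singleton] at ho
                rw [ho]; exact htP
              · refine ⟨j, Or.inl ((chores_spref inst hch i _ _).mpr
                  ⟨tb, ?_, ?_⟩)⟩
                · simp only [Finset.mem_sdiff, Finset.mem_singleton]
                  exact ⟨hj, fun h => htP (h ▸ hj)⟩
                · intro o ho him
                  rw [Finset.mem_singleton] at ho
                  exact absurd him (ho ▸ htb_top t)
          · refine ⟨a, ?_⟩
            rw [hAo i hia hib]
            exact wpref_empty inst hch i (P a)
      · -- Pareto optimality
        rintro ⟨B, hB, hw, h, hsp⟩
        have hBo : ∀ i, i ≠ a → i ≠ b → B i = ∅ := by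
          intro i h1 h2
          rcases hw i with hs | he
          · exfalso
            rw [chores_spref inst hch] at hs
            obtain ⟨c, hc, -⟩ := hs
            rw [hAo i h1 h2] at hc
            simp at hc
          · rw [he, hAo i h1 h2]
        have htBa : t ∉ B a := by
          intro htB
          rcases hw a with hs | he
          · rw [chores_spref inst hch] at hs
            obtain ⟨c, hc, hcond⟩ := hs
            rw [hAa] at hc
            have hct : c ≠ t := (Finset.mem_erase.mp (Finset.mem_sdiff.mp hc).1).1
            have := hcond t htB (ht_lt c hct)
            rw [hAa] at this
            simp at this
          · rw [he, hAa] at htB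
            simp at htB
        have htBb : t ∈ B b := by
          obtain ⟨i, hi⟩ := hB.2 t
          by_cases h1 : i = a
          · exact absurd (h1 ▸ hi) htBa
          · by_cases h2 : i = b
            · exact h2 ▸ hi
            · rw [hBo i h1 h2] at hi; simp at hi
        have hBb : B b = {t} := by
          rcases hw b with hs | he
          · exfalso
            rw [chores_spref inst hch] at hs
            obtain ⟨c, hc, -⟩ := hs
            rw [hAb] at hc
            rw [Finset.mem_sdiff, Finset.mem_singleton] at hc
            exact hc.2 (hc.1 ▸ htBb)
          · rw [he, hAb]
        have hBa : B a = Finset.univ.erase t := by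
          ext o
          rw [Finset.mem_erase]
          constructor
          · intro ho
            exact ⟨fun he => htBa (he ▸ ho), Finset.mem_univ o⟩
          · rintro ⟨hot, -⟩
            obtain ⟨i, hi⟩ := hB.2 o
            by_cases h1 : i = a
            · exact h1 ▸ hi
            · exfalso
              by_cases h2 : i = b
              · rw [h2, hBb, Finset.mem_singleton] at hi
                exact hot hi
              · rw [hBo i h1 h2] at hi; simp at hi
        have hBA : B h = A h := by
          by_cases h1 : h = a
          · rw [h1, hBa, hAa]
          · by_cases h2 : h = b
            · rw [h2, hBb, hAb]
            · rw [hBo h h1 h2, hAo h h1 h2]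
        rw [hBA] at hsp
        exact spref_irrefl inst h (A h) hsp
    · -- single agent
      push_neg at hb
      refine ⟨fun _ => Finset.univ, ⟨fun i j hij => absurd ((hb i).trans (hb j).symm) hij,
        fun o => ⟨a, Finset.mem_univ o⟩⟩, ?_, ?_⟩
      · intro i P hP
        refine ⟨a, Or.inr ?_⟩
        ext o
        simp only [Finset.mem_univ, true_iff]
        obtain ⟨j, hj⟩ := hP.2 o
        exact (hb j) ▸ hj
      · rintro ⟨B, hB, hw, h, hsp⟩
        have : B h = Finset.univ := by
          ext o
          simp only [Finset.mem_univ, iff_true]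
          obtain ⟨j, hj⟩ := hB.2 o
          rw [hb h, ← hb j]
          exact hj
        rw [this] at hsp
        exact spref_irrefl inst h Finset.univ hsp
end
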